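/- arXiv:2511.06357 — 3 statements merged into one kernel-verified Lean document; each statement's English description precedes it below -/
import Mathlib

section
/- Let E be a real normed space, B ≥ 0, and b : E × E → E a bilinear map with ‖b(u,v)‖ ≤ B‖u‖‖v‖ for all u,v. Fix x, y ∈ E, let L_n denote the set of full binary trees with n leaves labeled by x or y, and let α be a real coefficient assignment on ⋃_{n≥1} L_n with |α_T| ≤ K for all T, where K ≥ 1. If B(‖x‖ + ‖y‖) < 1/(4K), then ∑_{n≥1} ∑_{T ∈ L_n} |α_T| · ‖eval_b(T)‖ < ∞; that is, the family (α_T · eval_b(T)) indexed by all labeled trees is absolutely summable in norm. -/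
/-! Every finite sum of `‖eval T‖` is at most `2(‖x‖ + ‖y‖)`. A finite set of trees consists of
at most the two leaves together with nodes `node l r`, and by `‖b u v‖ ≤ B‖u‖‖v‖` the node part
is at most `B` times the product of the sums over the left and over the right subtrees, which
have fewer leaves. So, by induction on the number of leaves, any `c` with
`‖x‖ + ‖y‖ + B c² ≤ c` bounds all finite sums, and `c = 2(‖x‖ + ‖y‖)` qualifies because
`4B(‖x‖ + ‖y‖) ≤ 4KB(‖x‖ + ‖y‖) < 1`. This majorant argument replaces counting the trees
(Catalan numbers `≤ 4ⁿ`). Summability then follows by comparison, using `|α T| ≤ K`. -/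

/-- A full binary tree whose leaves are labeled by `true` (for `x`) or `false` (for `y`). -/
inductive LTree : Type
  | leaf : Bool → LTree
  | node : LTree → LTree → LTree

namespace LTree

/-- Number of leaves of a labeled full binary tree. -/
def leaves : LTree → ℕ
  | leaf _ => 1
  | node l r => l.leaves + r.leaves

/-- Evaluation of a labeled full binary tree: a leaf labeled `true` evaluates to `x`,
a leaf labeled `false` evaluates to `y`, and an internal node applies `b` to the
evaluations of its two subtrees. -/
def eval {E : Type*} (b : E → E → E) (x y : E) : LTree → E
  | leaf true => x
  | leaf false => y
  | node l r => b (eval b x y l) (eval b x y r)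

end LTree

namespace LTree

theorem one_le_leaves : ∀ T : LTree, 1 ≤ T.leaves
  | leaf _ => le_rfl
  | node l _ => (one_le_leaves l).trans (Nat.le_add_right _ _)

theorem leaves_lt_node_left (l r : LTree) : l.leaves < (node l r).leaves :=
  Nat.lt_add_of_pos_right (one_le_leaves r)

theorem leaves_lt_node_right (l r : LTree) : r.leaves < (node l r).leaves :=
  Nat.lt_add_of_pos_left (one_le_leaves l)

theorem node_injective : Function.Injective fun p : LTree × LTree => node p.1 p.2 :=
  fun _ _ h => Prod.ext (node.inj h).1 (node.inj h).2

noncomputable def nodePairs (s : Finset LTree) : Finset (LTree × LTree) :=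
  s.preimage _ node_injective.injOn

theorem mem_nodePairs {s : Finset LTree} {p : LTree × LTree} :
    p ∈ nodePairs s ↔ node p.1 p.2 ∈ s :=
  Finset.mem_preimage

theorem sum_le_sum_leaf_add_sum_nodePairs {M : Type*} [AddCommMonoid M] [PartialOrder M]
    [IsOrderedAddMonoid M] {f : LTree → M} (hf : ∀ T, 0 ≤ f T) (s : Finset LTree) :
    ∑ T ∈ s, f T ≤ f (leaf true) + f (leaf false) + ∑ p ∈ nodePairs s, f (node p.1 p.2) := by
  classical
  rw [← Finset.sum_filter_not_add_sum_filter s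
      (· ∈ Set.range fun p : LTree × LTree => node p.1 p.2), nodePairs, Finset.sum_preimage']
  gcongr
  calc ∑ T ∈ s with T ∉ Set.range _, f T
      ≤ ∑ T ∈ {leaf true, leaf false}, f T := by
        refine Finset.sum_le_sum_of_subset_of_nonneg ?_ fun T _ _ => hf T
        intro T hT
        match T, hT with
        | leaf true, _ => simp
        | leaf false, _ => simp
        | node l r, hT => exact absurd ⟨(l, r), rfl⟩ (Finset.mem_filter.mp hT).2
    _ = f (leaf true) + f (leaf false) := Finset.sum_pair (by simp)

theorem sum_nodePairs_le [DecidableEq LTree] {f : LTree → ℝ} (hf : ∀ T, 0 ≤ f T) {B : ℝ}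
    (hB : 0 ≤ B) (hnode : ∀ l r, f (node l r) ≤ B * f l * f r) (s : Finset LTree) :
    ∑ p ∈ nodePairs s, f (node p.1 p.2) ≤
      B * (∑ l ∈ (nodePairs s).image Prod.fst, f l) * ∑ r ∈ (nodePairs s).image Prod.snd, f r :=
  calc ∑ p ∈ nodePairs s, f (node p.1 p.2)
      ≤ ∑ p ∈ nodePairs s, B * f p.1 * f p.2 := Finset.sum_le_sum fun p _ => hnode p.1 p.2
    _ ≤ ∑ p ∈ (nodePairs s).image Prod.fst ×ˢ (nodePairs s).image Prod.snd, B * f p.1 * f p.2 :=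
        Finset.sum_le_sum_of_subset_of_nonneg
          (fun p hp => Finset.mem_product.mpr
            ⟨Finset.mem_image_of_mem _ hp, Finset.mem_image_of_mem _ hp⟩)
          fun p _ _ => mul_nonneg (mul_nonneg hB (hf p.1)) (hf p.2)
    _ = _ := by
        rw [Finset.sum_product, mul_assoc, Finset.sum_mul_sum, Finset.mul_sum]
        simp_rw [Finset.mul_sum, mul_assoc]

theorem sum_le_of_node_le_mul {f : LTree → ℝ} (hf : ∀ T, 0 ≤ f T) {B c : ℝ} (hB : 0 ≤ B)
    (hnode : ∀ l r, f (node l r) ≤ B * f l * f r)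
    (hc : f (leaf true) + f (leaf false) + B * c ^ 2 ≤ c) (s : Finset LTree) :
    ∑ T ∈ s, f T ≤ c := by
  classical
  have hc0 : 0 ≤ c := by
    linarith [hf (leaf true), hf (leaf false), mul_nonneg hB (sq_nonneg c)]
  suffices ∀ n, ∀ s : Finset LTree, (∀ T ∈ s, T.leaves ≤ n) → ∑ T ∈ s, f T ≤ c from
    this _ s fun T hT => Finset.le_sup (f := leaves) hT
  intro n
  induction n with
  | zero =>
    intro s hs
    have hs : s = ∅ := Finset.eq_empty_of_forall_notMem fun T hT =>
      Nat.not_succ_le_zero 0 ((one_le_leaves T).trans (hs T hT))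
    simpa only [hs, Finset.sum_empty] using hc0
  | succ n ih =>
    intro s hs
    set t := nodePairs s
    have hleft : ∀ l ∈ t.image Prod.fst, l.leaves ≤ n := by
      simp only [Finset.forall_mem_image]
      rintro ⟨l, r⟩ hp
      exact Nat.le_of_lt_succ ((leaves_lt_node_left l r).trans_le (hs _ (mem_nodePairs.mp hp)))
    have hright : ∀ r ∈ t.image Prod.snd, r.leaves ≤ n := by
      simp only [Finset.forall_mem_image]
      rintro ⟨l, r⟩ hp
      exact Nat.le_of_lt_succ ((leaves_lt_node_right l r).trans_le (hs _ (mem_nodePairs.mp hp)))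
    calc ∑ T ∈ s, f T
        ≤ f (leaf true) + f (leaf false) + ∑ p ∈ t, f (node p.1 p.2) :=
          sum_le_sum_leaf_add_sum_nodePairs hf s
      _ ≤ f (leaf true) + f (leaf false) +
            B * (∑ l ∈ t.image Prod.fst, f l) * ∑ r ∈ t.image Prod.snd, f r := by
          gcongr f (leaf true) + f (leaf false) + ?_
          exact sum_nodePairs_le hf hB hnode s
      _ ≤ f (leaf true) + f (leaf false) + B * c ^ 2 := by
          rw [mul_assoc, sq]
          gcongr
          · exact Finset.sum_nonneg fun l _ => hf l
          · exact ih _ hleft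
          · exact ih _ hright
      _ ≤ c := hc

theorem summable_norm_eval {E : Type*} [SeminormedAddGroup E] {B : ℝ} (hB : 0 ≤ B)
    {b : E → E → E} (hb : ∀ u v, ‖b u v‖ ≤ B * ‖u‖ * ‖v‖) {x y : E}
    (h : 4 * B * (‖x‖ + ‖y‖) ≤ 1) :
    Summable fun T : LTree => ‖T.eval b x y‖ := by
  have hfix : ‖x‖ + ‖y‖ + B * (2 * (‖x‖ + ‖y‖)) ^ 2 ≤ 2 * (‖x‖ + ‖y‖) := by
    nlinarith [mul_le_mul_of_nonneg_right h (by positivity : 0 ≤ ‖x‖ + ‖y‖)]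
  exact summable_of_sum_le (fun T => norm_nonneg _)
    (sum_le_of_node_le_mul (fun T => norm_nonneg _) hB (fun l r => hb _ _) hfix)

end LTree

/-- convergence of the BCH series in special Banach–Malcev algebras:
if `B(‖x‖+‖y‖) < 1/(4K)` then the family `(α_T · eval_b(T))`, indexed by all labeled full
binary trees (of all sizes `n ≥ 1`), is absolutely summable in norm. -/
theorem bch_convergence {E : Type*} [NormedAddCommGroup E] [NormedSpace ℝ E]
    (B : ℝ) (hB : 0 ≤ B) (b : E →ₗ[ℝ] E →ₗ[ℝ] E)
    (hb : ∀ u v : E, ‖b u v‖ ≤ B * ‖u‖ * ‖v‖)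
    (x y : E) (K : ℝ) (hK : 1 ≤ K)
    (α : LTree → ℝ) (hα : ∀ T, |α T| ≤ K)
    (h : B * (‖x‖ + ‖y‖) < 1 / (4 * K)) :
    Summable (fun T : LTree => |α T| * ‖T.eval (fun u v => b u v) x y‖) := by
  have hK0 : 0 < K := one_pos.trans_le hK
  have hsmall : 4 * B * (‖x‖ + ‖y‖) ≤ 1 := by
    have hBM : 0 ≤ B * (‖x‖ + ‖y‖) := by positivity
    rw [lt_div_iff₀ (by positivity)] at h
    nlinarith
  refine ((LTree.summable_norm_eval hB hb hsmall).mul_left K).of_nonneg_of_le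
    (fun T => by positivity) fun T => ?_
  exact mul_le_mul_of_nonneg_right (hα T) (norm_nonneg _)
end

section
/- Let E be a real normed space, B > 0, and b : E × E → E a bilinear map with ‖b(u,v)‖ ≤ B‖u‖‖v‖. Let K ≥ 1 and let α be a real coefficient assignment on labeled full binary trees with |α_T| ≤ K for all T. If x, y ∈ E satisfy ‖x‖ < 1/(8KB) and ‖y‖ < 1/(8KB), then ∑_{n≥1} ∑_{T ∈ L_n} |α_T| · ‖eval_b(T)‖ < ∞, where L_n is the set of full binary trees with n leaves labeled by x or y. -/
namespace LTreeAux

/-- Prefix-free encoding of labeled trees into bit strings. -/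
def enc : LTree → List Bool
  | .leaf b => [false, b]
  | .node l r => true :: (enc l ++ enc r)

lemma one_le_leaves (T : LTree) : 1 ≤ T.leaves := by
  induction T with
  | leaf b => simp [LTree.leaves]
  | node l r ihl ihr => simp only [LTree.leaves]; omega

lemma enc_length (T : LTree) : (enc T).length = 3 * T.leaves - 1 := by
  induction T with
  | leaf b => simp [enc, LTree.leaves]
  | node l r ihl ihr =>
    have hl := one_le_leaves l
    have hr := one_le_leaves r
    simp only [enc, LTree.leaves, List.length_cons, List.length_append, ihl, ihr]
    omega

lemma enc_prefix : ∀ (T₁ T₂ : LTree) (s₁ s₂ : List Bool),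
    enc T₁ ++ s₁ = enc T₂ ++ s₂ → T₁ = T₂ ∧ s₁ = s₂ := by
  intro T₁
  induction T₁ with
  | leaf b =>
    intro T₂ s₁ s₂ h
    cases T₂ with
    | leaf b' => simp [enc] at h; simp [h.1, h.2]
    | node l r => simp [enc] at h
  | node l r ihl ihr =>
    intro T₂ s₁ s₂ h
    cases T₂ with
    | leaf b' => simp [enc] at h
    | node l' r' =>
      simp only [enc, List.cons_append, List.cons.injEq, List.append_assoc, true_and] at h
      obtain ⟨hl, hrest⟩ := ihl l' _ _ h
      obtain ⟨hr, hs⟩ := ihr r' _ _ hrest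
      exact ⟨by rw [hl, hr], hs⟩

lemma enc_injective : Function.Injective enc := by
  intro T₁ T₂ h
  exact (enc_prefix T₁ T₂ [] [] (by simp [h])).1

/-- Finset of bit strings of length `L`. -/
noncomputable def strings (L : ℕ) : Finset (List Bool) :=
  (List.finite_length_eq Bool L).toFinset

lemma mem_strings {L : ℕ} {w : List Bool} : w ∈ strings L ↔ w.length = L := by
  simp [strings]

lemma card_strings (L : ℕ) : (strings L).card = 2 ^ L := by
  classical
  have e : strings L ≃ List.Vector Bool L :=
    { toFun := fun w => ⟨w.1, mem_strings.1 w.2⟩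
      invFun := fun v => ⟨v.1, mem_strings.2 v.2⟩
      left_inv := fun w => rfl
      right_inv := fun v => rfl }
  have := Fintype.card_congr e
  rw [Fintype.card_coe] at this
  rw [this, card_vector, Fintype.card_bool]

end LTreeAux

/-- corollary on the symmetric ball: if `‖x‖ < 1/(8KB)` and `‖y‖ < 1/(8KB)`,
the BCH-type series (sum over all labeled full binary trees) converges absolutely. -/
theorem bch_convergence_ball {E : Type*} [NormedAddCommGroup E] [NormedSpace ℝ E]
    (B : ℝ) (hB : 0 < B) (b : E →ₗ[ℝ] E →ₗ[ℝ] E)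
    (hb : ∀ u v : E, ‖b u v‖ ≤ B * ‖u‖ * ‖v‖)
    (K : ℝ) (hK : 1 ≤ K)
    (α : LTree → ℝ) (hα : ∀ T, |α T| ≤ K)
    (x y : E) (hx : ‖x‖ < 1 / (8 * K * B)) (hy : ‖y‖ < 1 / (8 * K * B)) :
    Summable (fun T : LTree => |α T| * ‖T.eval (fun u v => b u v) x y‖) := by
  classical
  set r : ℝ := max ‖x‖ ‖y‖ with hr_def
  have hr0 : 0 ≤ r := le_trans (norm_nonneg x) (le_max_left _ _)
  have hK0 : 0 < K := lt_of_lt_of_le one_pos hK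
  have hr : r < 1 / (8 * K * B) := max_lt hx hy
  -- key norm bound, by induction on trees
  have heval : ∀ T : LTree,
      ‖T.eval (fun u v => b u v) x y‖ ≤ B ^ (T.leaves - 1) * r ^ T.leaves := by
    intro T
    induction T with
    | leaf c =>
      cases c <;> simp only [LTree.eval, LTree.leaves, pow_one, Nat.sub_self, pow_zero, one_mul]
      · exact le_max_right _ _
      · exact le_max_left _ _
    | node l r' ihl ihr =>
      have hl1 := LTreeAux.one_le_leaves l
      have hr1 := LTreeAux.one_le_leaves r'
      calc ‖(LTree.node l r').eval (fun u v => b u v) x y‖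
          ≤ B * ‖l.eval (fun u v => b u v) x y‖ * ‖r'.eval (fun u v => b u v) x y‖ :=
            hb _ _
        _ ≤ B * (B ^ (l.leaves - 1) * r ^ l.leaves) * (B ^ (r'.leaves - 1) * r ^ r'.leaves) := by
            apply mul_le_mul
            · exact mul_le_mul_of_nonneg_left ihl hB.le
            · exact ihr
            · exact norm_nonneg _
            · positivity
        _ = B ^ ((LTree.node l r').leaves - 1) * r ^ (LTree.node l r').leaves := by
            simp only [LTree.leaves]
            rw [show l.leaves + r'.leaves - 1 = (l.leaves - 1) + (r'.leaves - 1) + 1 by omega]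
            rw [pow_succ, pow_add, pow_add]
            ring
  -- the majorant on ℕ × List Bool
  set g : ℕ × List Bool → ℝ := fun p =>
    if p.2.length = 3 * p.1 - 1 then K * (B ^ (p.1 - 1) * r ^ p.1) else 0 with hg_def
  have hg0 : ∀ p, 0 ≤ g p := by
    intro p
    simp only [hg_def]
    split
    · positivity
    · exact le_rfl
  -- geometric ratio
  set t : ℝ := 8 * B * r with ht_def
  have ht0 : 0 ≤ t := by positivity
  have ht1 : t < 1 := by
    have h8 : (0:ℝ) < 8 * K * B := by positivity
    have : 8 * B * r < 8 * B * (1 / (8 * K * B)) := by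
      apply mul_lt_mul_of_pos_left hr (by positivity)
    have heq : 8 * B * (1 / (8 * K * B)) = 1 / K := by field_simp
    rw [heq] at this
    calc t < 1 / K := this
      _ ≤ 1 := by rw [div_le_one hK0]; exact hK
  set C : ℝ := K + K / B with hC_def
  have hCt : Summable (fun n : ℕ => C * t ^ n) :=
    (summable_geometric_of_lt_one ht0 ht1).mul_left C
  -- bound the per-level sums
  have hbound : ∀ n : ℕ, (2:ℝ) ^ (3 * n - 1) * (K * (B ^ (n - 1) * r ^ n)) ≤ C * t ^ n := by
    intro n
    cases n with
    | zero =>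
      simp only [Nat.mul_zero, Nat.zero_sub, pow_zero, mul_one, one_mul, hC_def]
      have : 0 < K / B := by positivity
      linarith
    | succ m =>
      have h1 : 3 * (m + 1) - 1 = 3 * m + 2 := by omega
      have h2 : m + 1 - 1 = m := rfl
      rw [h1, h2]
      have h2pow : (2:ℝ) ^ (3 * m + 2) = 4 * 8 ^ m := by
        rw [pow_add, pow_mul]
        norm_num
        ring
      have htpow : t ^ (m + 1) = 8 ^ m * B ^ m * r ^ (m + 1) * (8 * B) := by
        rw [ht_def, mul_pow, mul_pow, pow_succ, pow_succ, pow_succ]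
        ring
      rw [h2pow, htpow]
      have hP : (0:ℝ) ≤ 8 ^ m * B ^ m * r ^ (m + 1) := by positivity
      have hcoef : 4 * K ≤ C * (8 * B) := by
        rw [hC_def]
        have : (K + K / B) * (8 * B) = 8 * K * B + 8 * K := by field_simp
        rw [this]
        nlinarith [mul_pos hK0 hB]
      calc 4 * 8 ^ m * (K * (B ^ m * r ^ (m + 1)))
          = (8 ^ m * B ^ m * r ^ (m + 1)) * (4 * K) := by ring
        _ ≤ (8 ^ m * B ^ m * r ^ (m + 1)) * (C * (8 * B)) :=
            mul_le_mul_of_nonneg_left hcoef hP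
        _ = C * (8 ^ m * B ^ m * r ^ (m + 1) * (8 * B)) := by ring
  -- summability of g
  have hfib : ∀ n : ℕ, Summable (fun w : List Bool => g (n, w)) := by
    intro n
    apply summable_of_ne_finset_zero (s := LTreeAux.strings (3 * n - 1))
    intro w hw
    simp only [hg_def]
    rw [if_neg]
    exact fun h => hw (LTreeAux.mem_strings.2 h)
  have htsum : ∀ n : ℕ, ∑' w : List Bool, g (n, w) ≤ C * t ^ n := by
    intro n
    have h1 : ∑' w : List Bool, g (n, w)
        = ∑ w ∈ LTreeAux.strings (3 * n - 1), g (n, w) := by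
      apply tsum_eq_sum
      intro w hw
      simp only [hg_def]
      rw [if_neg]
      exact fun h => hw (LTreeAux.mem_strings.2 h)
    rw [h1]
    have h2 : ∑ w ∈ LTreeAux.strings (3 * n - 1), g (n, w)
        ≤ (LTreeAux.strings (3 * n - 1)).card • (K * (B ^ (n - 1) * r ^ n)) := by
      apply Finset.sum_le_card_nsmul
      intro w hw
      simp only [hg_def]
      rw [if_pos (LTreeAux.mem_strings.1 hw)]
    rw [LTreeAux.card_strings, nsmul_eq_mul] at h2
    calc ∑ w ∈ LTreeAux.strings (3 * n - 1), g (n, w)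
        ≤ ((2:ℕ) ^ (3 * n - 1) : ℕ) * (K * (B ^ (n - 1) * r ^ n)) := h2
      _ = (2:ℝ) ^ (3 * n - 1) * (K * (B ^ (n - 1) * r ^ n)) := by push_cast; ring
      _ ≤ C * t ^ n := hbound n
  have hg_sum : Summable g := by
    apply (summable_prod_of_nonneg hg0).2
    refine ⟨fun n => hfib n, ?_⟩
    apply Summable.of_nonneg_of_le (fun n => tsum_nonneg fun w => hg0 (n, w)) htsum hCt
  -- pull back along the injection
  have hi : Function.Injective (fun T : LTree => (T.leaves, LTreeAux.enc T)) := by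
    intro T₁ T₂ h
    exact LTreeAux.enc_injective (congrArg Prod.snd h)
  have hgi : Summable (fun T : LTree => g (T.leaves, LTreeAux.enc T)) :=
    hg_sum.comp_injective hi
  apply Summable.of_nonneg_of_le (fun T => by positivity) _ hgi
  intro T
  have hlen : (LTreeAux.enc T).length = 3 * T.leaves - 1 := LTreeAux.enc_length T
  simp only [hg_def]
  rw [if_pos hlen]
  exact mul_le_mul (hα T) (heval T) (norm_nonneg _) hK0.le
end

section
/- For every real number x with 0 < x < 1/4, the series ∑_{n≥0} C_n x^n converges and its sum equals (1 − √(1 − 4x))/(2x), where C_n denotes the n-th Catalan number. -/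
open Finset

private lemma catalan_cast_eq (n : ℕ) :
    (catalan n : ℝ) = (Nat.centralBinom n : ℝ) / (n + 1) := by
  have h : ((n : ℝ) + 1) * catalan n = Nat.centralBinom n := by
    exact_mod_cast succ_mul_catalan_eq_centralBinom n
  have hn : ((n : ℝ) + 1) ≠ 0 := by positivity
  field_simp [← h]
  linarith

private lemma catalan_partial_sum (N : ℕ) :
    ∑ n ∈ Finset.range N, (catalan n : ℝ) / 4 ^ n
      = 2 - 2 * Nat.centralBinom N / 4 ^ N := by
  induction N with
  | zero => simp [Nat.centralBinom_zero]
  | succ N ih =>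
    rw [Finset.sum_range_succ, ih, catalan_cast_eq]
    have hrec : ((N : ℝ) + 1) * Nat.centralBinom (N + 1)
        = 2 * (2 * N + 1) * Nat.centralBinom N := by
      exact_mod_cast Nat.succ_mul_centralBinom_succ N
    have hN : ((N : ℝ) + 1) ≠ 0 := by positivity
    have h4 : (4 : ℝ) ^ N ≠ 0 := by positivity
    have h4' : (4 : ℝ) ^ (N + 1) = 4 * 4 ^ N := by ring
    rw [h4']
    field_simp
    linear_combination 2 * hrec

private lemma centralBinom_le_four_pow (n : ℕ) : (Nat.centralBinom n : ℝ) ≤ 4 ^ n := by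
  have : Nat.centralBinom n ≤ 4 ^ n := by
    calc Nat.centralBinom n = (2 * n).choose n := rfl
      _ ≤ (2 * n + 1).choose n := Nat.choose_le_choose n (Nat.le_succ _)
      _ ≤ 4 ^ n := Nat.choose_middle_le_pow n
  exact_mod_cast this

private lemma catalan_le_four_pow (n : ℕ) : (catalan n : ℝ) ≤ 4 ^ n := by
  rw [catalan_cast_eq]
  have h1 : (1 : ℝ) ≤ (n : ℝ) + 1 := by have := n.cast_nonneg (α := ℝ); linarith
  calc (Nat.centralBinom n : ℝ) / (n + 1) ≤ (Nat.centralBinom n : ℝ) :=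
        div_le_self (by positivity) h1
    _ ≤ 4 ^ n := centralBinom_le_four_pow n

/-- for `0 < x < 1/4`, the Catalan generating series converges with sum
`(1 - √(1-4x))/(2x)`. -/
theorem catalan_generating_function (x : ℝ) (hx : 0 < x) (hx4 : x < 1 / 4) :
    HasSum (fun n : ℕ => (catalan n : ℝ) * x ^ n)
      ((1 - Real.sqrt (1 - 4 * x)) / (2 * x)) := by
  set f : ℕ → ℝ := fun n => (catalan n : ℝ) * x ^ n with hf_def
  have hfnonneg : ∀ n, 0 ≤ f n := fun n => by positivity
  have hfle : ∀ n, f n ≤ (4 * x) ^ n := by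
    intro n
    have := catalan_le_four_pow n
    calc f n ≤ 4 ^ n * x ^ n := by
          apply mul_le_mul_of_nonneg_right this (by positivity)
      _ = (4 * x) ^ n := (mul_pow _ _ _).symm
  have h4x : (4 : ℝ) * x < 1 := by linarith
  have hsummable : Summable f := by
    apply Summable.of_nonneg_of_le hfnonneg hfle
    exact summable_geometric_of_lt_one (by positivity) h4x
  set S := ∑' n, f n with hS_def
  have hhs : HasSum f S := hsummable.hasSum
  -- S ≤ 2
  have hSnonneg : 0 ≤ S := tsum_nonneg hfnonneg
  have hSle2 : S ≤ 2 := by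
    apply Real.tsum_le_of_sum_range_le hfnonneg
    intro N
    have hstep : ∑ n ∈ Finset.range N, f n
        ≤ ∑ n ∈ Finset.range N, (catalan n : ℝ) / 4 ^ n := by
      apply Finset.sum_le_sum
      intro n _
      have hxn : x ^ n ≤ (1 / 4 : ℝ) ^ n :=
        pow_le_pow_left₀ hx.le hx4.le n
      calc f n ≤ (catalan n : ℝ) * (1 / 4) ^ n := by
            apply mul_le_mul_of_nonneg_left hxn (by positivity)
        _ = (catalan n : ℝ) / 4 ^ n := by
            rw [div_pow, one_pow]; ring
    calc ∑ n ∈ Finset.range N, f n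
        ≤ ∑ n ∈ Finset.range N, (catalan n : ℝ) / 4 ^ n := hstep
      _ = 2 - 2 * Nat.centralBinom N / 4 ^ N := catalan_partial_sum N
      _ ≤ 2 := by
          have : (0 : ℝ) ≤ 2 * Nat.centralBinom N / 4 ^ N := by positivity
          linarith
  -- Cauchy product: S * S = ∑' n, catalan (n+1) * x ^ n
  have hnorm : Summable fun n => ‖f n‖ := by
    simpa [Real.norm_of_nonneg (hfnonneg _)] using hsummable
  have hcauchy : S * S = ∑' n : ℕ,
      ∑ kl ∈ antidiagonal n, f kl.1 * f kl.2 :=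
    tsum_mul_tsum_eq_tsum_sum_antidiagonal_of_summable_norm hnorm hnorm
  have hinner : ∀ n : ℕ, (∑ kl ∈ antidiagonal n, f kl.1 * f kl.2)
      = (catalan (n + 1) : ℝ) * x ^ n := by
    intro n
    have : ∀ kl ∈ antidiagonal n, f kl.1 * f kl.2
        = ((catalan kl.1 * catalan kl.2 : ℕ) : ℝ) * x ^ n := by
      intro kl hkl
      have hkl' : kl.1 + kl.2 = n := Finset.HasAntidiagonal.mem_antidiagonal.mp hkl
      simp only [hf_def]
      push_cast
      rw [← hkl', pow_add]
      ring
    rw [Finset.sum_congr rfl this, ← Finset.sum_mul, ← Nat.cast_sum,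
      ← catalan_succ' n]
  rw [funext hinner] at hcauchy
  -- x * (S * S) = S - 1
  have hshift : HasSum (fun n : ℕ => f (n + 1)) (S - 1) := by
    have h0 : HasSum f (S - 1 + ∑ i ∈ Finset.range 1, f i) := by
      simpa [hf_def] using hhs
    exact (hasSum_nat_add_iff 1).mpr h0
  have hshift' : HasSum (fun n : ℕ => x * ((catalan (n + 1) : ℝ) * x ^ n)) (S - 1) := by
    apply hshift.congr_fun
    intro n
    simp only [hf_def, pow_succ]
    ring
  have hxT : x * ∑' n : ℕ, (catalan (n + 1) : ℝ) * x ^ n = S - 1 := by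
    rw [← tsum_mul_left]
    exact hshift'.tsum_eq
  have heq : x * (S * S) = S - 1 := by rw [hcauchy]; exact hxT
  -- solve the quadratic
  have h14 : (0 : ℝ) ≤ 1 - 4 * x := by linarith
  set y := Real.sqrt (1 - 4 * x) with hy_def
  have hy2 : y ^ 2 = 1 - 4 * x := Real.sq_sqrt h14
  have hkey : (1 - 2 * x * S) ^ 2 = 1 - 4 * x := by nlinarith [heq]
  have h2xS : 0 ≤ 1 - 2 * x * S := by nlinarith
  have hyval : y = 1 - 2 * x * S := by
    rw [hy_def, ← hkey, Real.sqrt_sq h2xS]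
  have hSval : S = (1 - y) / (2 * x) := by
    rw [hyval]
    field_simp
    ring
  rw [← hSval]
  exact hhs
end
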